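/- Let z ∈ [0,1)^n be such that for every agent k, z_k minimizes the map t ↦ v(t, z_{−k}) over t ∈ [0,1), where v(z) = (∑_j π_j² σ_j²/(1 − z_j)²)/γ(z)². Then there exists α with 0 < α ≤ α_* = 1/max_i(π_i σ_i²) such that z_i = 1 − α π_i σ_i² for every i; equivalently, the vector with entries (π_i/(1 − z_i))/γ(z) equals μ*, where μ*_i = σ_i^{−2}/∑_j σ_j^{−2}. -/

import Mathlib

open Finset

private lemma stmt13_key (s A B xk : ℝ) (hs : 0 < s) (hB : 0 < B) (hxk : 0 < xk)
    (hlt : s * xk * B < A)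
    (hin : (s * xk ^ 2 + A) / (xk + B) ^ 2 ≤
      (s * (A / (s * B)) ^ 2 + A) / (A / (s * B) + B) ^ 2) : False := by
  have hA : 0 < A := lt_trans (by positivity) hlt
  have hR : (s * (A / (s * B)) ^ 2 + A) / (A / (s * B) + B) ^ 2
      = s * A / (A + s * B ^ 2) := by
    rw [div_eq_div_iff (by positivity) (by positivity)]
    field_simp
  rw [hR, div_le_div_iff₀ (by positivity) (by positivity)] at hin
  nlinarith [hin, mul_pos (sub_pos.mpr hlt) (sub_pos.mpr hlt)]

/-- Let `z ∈ [0,1)ⁿ` be such that for every agent `k`, `z_k` minimizes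
`t ↦ v(t, z_{-k})` over `t ∈ [0,1)`, where
`v(z) = (∑_j π_j² σ_j²/(1-z_j)²)/γ(z)²`. Then there exists `α` with
`0 < α ≤ α_* = 1/max_i(π_i σ_i²)` such that `z_i = 1 - α π_i σ_i²` for every `i`;
equivalently the vector with entries `(π_i/(1-z_i))/γ(z)` equals
`μ*_i = σ_i^{-2}/∑_j σ_j^{-2}`. -/
theorem stmt_13 (n : ℕ) (hn : 2 ≤ n)
    (π σ2 : Fin n → ℝ) (hπpos : ∀ i, 0 < π i) (hπsum : ∑ i, π i = 1)
    (hσ : ∀ i, 0 < σ2 i)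
    (z : Fin n → ℝ) (hz : ∀ i, z i ∈ Set.Ico (0 : ℝ) 1)
    (hmin : ∀ k : Fin n, ∀ t ∈ Set.Ico (0 : ℝ) 1,
      (∑ j, (π j) ^ 2 * σ2 j / (1 - z j) ^ 2) / (∑ j, π j / (1 - z j)) ^ 2 ≤
      (∑ j, (π j) ^ 2 * σ2 j / (1 - Function.update z k t j) ^ 2) /
        (∑ j, π j / (1 - Function.update z k t j)) ^ 2) :
    (∃ α : ℝ, 0 < α ∧
        α ≤ 1 / (Finset.univ.sup' ⟨⟨0, by omega⟩, Finset.mem_univ _⟩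
                  fun i => π i * σ2 i) ∧
        ∀ i, z i = 1 - α * (π i * σ2 i)) ∧
    (∀ i, (π i / (1 - z i)) / (∑ j, π j / (1 - z j))
        = (σ2 i)⁻¹ / ∑ j, (σ2 j)⁻¹) := by
  have h1z : ∀ i, 0 < 1 - z i := fun i => by have := (hz i).2; linarith
  set x : Fin n → ℝ := fun i => π i / (1 - z i) with hxdef
  have hx : ∀ i, 0 < x i := fun i => div_pos (hπpos i) (h1z i)
  have hxπ : ∀ i, π i ≤ x i := by
    intro i
    rw [hxdef]
    rw [le_div_iff₀ (h1z i)]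
    nlinarith [(hz i).1, (hπpos i).le]
  -- rewriting the sums in terms of x
  have hS : ∀ j, (π j) ^ 2 * σ2 j / (1 - z j) ^ 2 = σ2 j * x j ^ 2 := by
    intro j
    rw [hxdef]
    field_simp
  -- first-order condition at every k
  have foc : ∀ k : Fin n, (∑ j ∈ univ.erase k, σ2 j * x j ^ 2) ≤
      σ2 k * x k * (∑ j ∈ univ.erase k, x j) := by
    intro k
    by_contra hcon
    push_neg at hcon
    set A : ℝ := ∑ j ∈ univ.erase k, σ2 j * x j ^ 2 with hA
    set B : ℝ := ∑ j ∈ univ.erase k, x j with hB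
    have hne : (univ.erase k).Nonempty := by
      rw [← Finset.card_pos, Finset.card_erase_of_mem (mem_univ k), Finset.card_univ,
        Fintype.card_fin]
      omega
    have hBpos : 0 < B := Finset.sum_pos (fun j _ => hx j) hne
    set s : ℝ := σ2 k with hsdef
    have hspos : 0 < s := hσ k
    have hApos : 0 < A := lt_trans (mul_pos (mul_pos hspos (hx k)) hBpos) hcon
    set xstar : ℝ := A / (s * B) with hxstar
    have hxstargt : x k < xstar := by
      rw [hxstar, lt_div_iff₀ (by positivity)]
      nlinarith [hcon]
    have hxstarpos : 0 < xstar := lt_trans (hx k) hxstargt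
    have hq1 : π k / xstar ≤ 1 :=
      (div_le_one hxstarpos).mpr (le_of_lt (lt_of_le_of_lt (hxπ k) hxstargt))
    have hq0 : 0 < π k / xstar := div_pos (hπpos k) hxstarpos
    have htmem : 1 - π k / xstar ∈ Set.Ico (0 : ℝ) 1 := ⟨by linarith, by linarith⟩
    set t : ℝ := 1 - π k / xstar with ht
    have h1t : 1 - t = π k / xstar := by rw [ht]; ring
    have key := hmin k t htmem
    -- rewrite sums
    have e1 : (∑ j, (π j) ^ 2 * σ2 j / (1 - z j) ^ 2) = s * x k ^ 2 + A := by
      rw [show (∑ j, (π j) ^ 2 * σ2 j / (1 - z j) ^ 2) = ∑ j, σ2 j * x j ^ 2 from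
        Finset.sum_congr rfl fun j _ => hS j, ← Finset.add_sum_erase _ _ (mem_univ k),
        hsdef, hA]
    have e2 : (∑ j, π j / (1 - z j)) = x k + B := by
      rw [← Finset.add_sum_erase _ _ (mem_univ k)]
    have e3 : (∑ j, (π j) ^ 2 * σ2 j / (1 - Function.update z k t j) ^ 2)
        = s * xstar ^ 2 + A := by
      rw [← Finset.add_sum_erase _ _ (mem_univ k)]
      congr 1
      · rw [Function.update_self, h1t, hsdef]
        have hπk : (π k : ℝ) ≠ 0 := ne_of_gt (hπpos k)
        have hxs : xstar ≠ 0 := ne_of_gt hxstarpos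
        field_simp
      · refine Finset.sum_congr rfl fun j hj => ?_
        rw [Function.update_of_ne (Finset.ne_of_mem_erase hj), hS j]
    have e4 : (∑ j, π j / (1 - Function.update z k t j)) = xstar + B := by
      rw [← Finset.add_sum_erase _ _ (mem_univ k)]
      congr 1
      · rw [Function.update_self, h1t, div_div_eq_mul_div,
          mul_div_cancel_left₀ _ (ne_of_gt (hπpos k))]
      · exact Finset.sum_congr rfl fun j hj =>
          by rw [Function.update_of_ne (Finset.ne_of_mem_erase hj)]
    rw [e1, e2, e3, e4] at key
    exact stmt13_key s A B (x k) hspos hBpos (hx k) hcon (by rwa [← hxstar])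
  -- pick the argmin of c i = σ2 i * x i
  have hnonempty : (univ : Finset (Fin n)).Nonempty := ⟨⟨0, by omega⟩, mem_univ _⟩
  obtain ⟨k, -, hk⟩ := Finset.exists_min_image univ (fun i => σ2 i * x i) hnonempty
  simp only [mem_univ, forall_true_left] at hk
  set c : ℝ := σ2 k * x k with hc
  have hcpos : 0 < c := mul_pos (hσ k) (hx k)
  have hle : ∀ j ∈ univ.erase k, c * x j ≤ σ2 j * x j ^ 2 := by
    intro j _
    have := hk j
    nlinarith [hx j]
  have hsum_le : (∑ j ∈ univ.erase k, c * x j) ≤ ∑ j ∈ univ.erase k, σ2 j * x j ^ 2 :=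
    Finset.sum_le_sum hle
  have hsum_ge : (∑ j ∈ univ.erase k, σ2 j * x j ^ 2) ≤ ∑ j ∈ univ.erase k, c * x j := by
    calc (∑ j ∈ univ.erase k, σ2 j * x j ^ 2) ≤ σ2 k * x k * (∑ j ∈ univ.erase k, x j) :=
        foc k
      _ = ∑ j ∈ univ.erase k, c * x j := by rw [hc]; exact Finset.mul_sum _ _ _
  have hsum_eq : (∑ j ∈ univ.erase k, c * x j) = ∑ j ∈ univ.erase k, σ2 j * x j ^ 2 :=
    le_antisymm hsum_le hsum_ge
  have heq' : ∀ j ∈ univ.erase k, c * x j = σ2 j * x j ^ 2 :=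
    (Finset.sum_eq_sum_iff_of_le hle).mp hsum_eq
  have heq : ∀ j, σ2 j * x j = c := by
    intro j
    by_cases hj : j = k
    · rw [hj, hc]
    · have := heq' j (Finset.mem_erase.mpr ⟨hj, mem_univ j⟩)
      have hxj := hx j
      nlinarith
  -- now derive the conclusions
  have h2 : ∀ i, π i * σ2 i = c * (1 - z i) := by
    intro i
    have hh := heq i
    simp only [hxdef] at hh
    have hne : (1 - z i) ≠ 0 := (h1z i).ne'
    field_simp at hh
    linarith [hh]
  constructor
  · refine ⟨c⁻¹, inv_pos.mpr hcpos, ?_, ?_⟩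
    · have hsup_le : (Finset.univ.sup' ⟨⟨0, by omega⟩, Finset.mem_univ _⟩
          fun i => π i * σ2 i) ≤ c := by
        apply Finset.sup'_le
        intro i _
        have := h2 i
        nlinarith [(hz i).1, hcpos]
      have hsup_pos : 0 < (Finset.univ.sup' ⟨⟨0, by omega⟩, Finset.mem_univ _⟩
          fun i => π i * σ2 i) := by
        refine lt_of_lt_of_le (mul_pos (hπpos ⟨0, by omega⟩) (hσ ⟨0, by omega⟩)) ?_
        exact Finset.le_sup' (fun i => π i * σ2 i) (mem_univ (⟨0, by omega⟩ : Fin n))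
      rw [inv_eq_one_div]
      exact one_div_le_one_div_of_le hsup_pos hsup_le
    · intro i
      rw [h2 i, inv_mul_cancel_left₀ (ne_of_gt hcpos)]
      ring
  · intro i
    have hxi : ∀ j, π j / (1 - z j) = c * (σ2 j)⁻¹ := by
      intro j
      rw [div_eq_iff (h1z j).ne']
      have hσne : (σ2 j) ≠ 0 := ne_of_gt (hσ j)
      field_simp
      linarith [h2 j]
    rw [hxi i]
    have : (∑ j, π j / (1 - z j)) = c * ∑ j, (σ2 j)⁻¹ := by
      rw [Finset.mul_sum]
      exact Finset.sum_congr rfl fun j _ => hxi j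
    rw [this, mul_div_mul_left _ _ (ne_of_gt hcpos)]
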